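/- arXiv:2305.14063 — 3 statements merged into one kernel-verified Lean document; each statement's English description precedes it below -/
import Mathlib

section
/- Let E and Ê be subspaces of a real inner product space H consisting of L²-type vectors, and define δ_b(E, Ê) = sup over unit vectors v ∈ E of the distance from v to Ê, and δ̄_b(E, Ê) = sup over unit vectors v ∈ E of the infimum of ‖v − v̂‖ over unit vectors v̂ ∈ Ê. If δ_b(E, Ê) ≤ 1, then δ̄_b(E, Ê)² ≤ 2 − 2√(1 − δ_b(E, Ê)²). -/
/-!
If `v` is a unit vector at distance `d` from `F`, its orthogonal projection `P v` onto `F` has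
norm `√(1 - d²)`, and the unit vector `w` of `F` in the direction of `P v` (any unit vector of `F`
if `P v = 0`) satisfies `⟪v, w⟫ = ‖P v‖`, so `‖v - w‖² = 2 - 2√(1 - d²)`. This is increasing in
`d`, and `d ≤ δ_b`.
-/

open scoped RealInnerProductSpace

namespace Submodule

lemma iInf_norm_sub_le_norm {V : Type*} [SeminormedAddCommGroup V] [Module ℝ V]
    (K : Submodule ℝ V) (v : V) : ⨅ w : K, ‖v - w‖ ≤ ‖v‖ :=
  ciInf_le_of_le ⟨0, Set.forall_mem_range.2 fun _ => norm_nonneg _⟩ 0 (by simp)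

variable {H : Type*} [NormedAddCommGroup H] [InnerProductSpace ℝ H]
  (K : Submodule ℝ H) [K.HasOrthogonalProjection]

lemma norm_starProjection_eq_sqrt (v : H) :
    ‖K.starProjection v‖ = √(‖v‖ ^ 2 - (⨅ w : K, ‖v - w‖) ^ 2) := by
  have hpyth := norm_sq_eq_add_norm_sq_starProjection v K
  rw [starProjection_orthogonal_val, starProjection_minimal] at hpyth
  rw [← Real.sqrt_sq (norm_nonneg (K.starProjection v))]
  congr 1
  linarith

lemma exists_norm_eq_one_inner_eq_norm_starProjection (hK : K ≠ ⊥) (v : H) :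
    ∃ w ∈ K, ‖w‖ = 1 ∧ ⟪v, w⟫ = ‖K.starProjection v‖ := by
  have inner_eq (w : H) (hw : w ∈ K) : ⟪v, w⟫ = ⟪K.starProjection v, w⟫ := by
    rw [inner_starProjection_left_eq_right, starProjection_eq_self_iff.2 hw]
  by_cases hP : K.starProjection v = 0
  · obtain ⟨u, huK, hu⟩ := exists_mem_ne_zero_of_ne_bot hK
    refine ⟨‖u‖⁻¹ • u, K.smul_mem _ huK, norm_smul_inv_norm hu, ?_⟩
    rw [inner_eq _ (K.smul_mem _ huK), hP, inner_zero_left, norm_zero]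
  · have hPK : K.starProjection v ∈ K := K.starProjection_apply_mem v
    refine ⟨‖K.starProjection v‖⁻¹ • K.starProjection v, K.smul_mem _ hPK,
      norm_smul_inv_norm hP, ?_⟩
    rw [inner_eq _ (K.smul_mem _ hPK), real_inner_smul_right, real_inner_self_eq_norm_sq]
    field_simp

lemma iInf_norm_sub_unit_le (hK : K ≠ ⊥) {v : H} (hv : ‖v‖ = 1) :
    ⨅ w : {w : H // w ∈ K ∧ ‖w‖ = 1}, ‖v - w‖ ≤ √(2 - 2 * √(1 - (⨅ w : K, ‖v - w‖) ^ 2)) := by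
  obtain ⟨w, hwK, hw, hinner⟩ := K.exists_norm_eq_one_inner_eq_norm_starProjection hK v
  refine ciInf_le_of_le ⟨0, Set.forall_mem_range.2 fun _ => norm_nonneg _⟩ ⟨w, hwK, hw⟩ ?_
  refine Real.le_sqrt_of_sq_le ?_
  rw [norm_sub_sq_real, hinner, norm_starProjection_eq_sqrt, hv, hw, one_pow]
  linarith

end Submodule

theorem stmt_3_general {H : Type*} [NormedAddCommGroup H] [InnerProductSpace ℝ H]
    (E F : Submodule ℝ H) [FiniteDimensional ℝ F] (hF : F ≠ ⊥)
    (δb δb' : ℝ)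
    (hδb : δb = ⨆ v : {v : H // v ∈ E ∧ ‖v‖ = 1}, ⨅ w : F, ‖(v : H) - (w : H)‖)
    (hδb' : δb' = ⨆ v : {v : H // v ∈ E ∧ ‖v‖ = 1},
      ⨅ w : {w : H // w ∈ F ∧ ‖w‖ = 1}, ‖(v : H) - (w : H)‖) :
    δb' ^ 2 ≤ 2 - 2 * Real.sqrt (1 - δb ^ 2) := by
  have hdist_le (v : {v : H // v ∈ E ∧ ‖v‖ = 1}) : ⨅ w : F, ‖(v : H) - w‖ ≤ δb := by
    rw [hδb]
    exact le_ciSup ⟨1, Set.forall_mem_range.2 fun u => u.2.2 ▸ F.iInf_norm_sub_le_norm u⟩ v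
  have hunit_le (v : {v : H // v ∈ E ∧ ‖v‖ = 1}) :
      ⨅ w : {w : H // w ∈ F ∧ ‖w‖ = 1}, ‖(v : H) - w‖ ≤ √(2 - 2 * √(1 - δb ^ 2)) := by
    refine (F.iInf_norm_sub_unit_le hF v.2.2).trans ?_
    have hdist_nonneg : 0 ≤ ⨅ w : F, ‖(v : H) - w‖ := Real.iInf_nonneg fun _ => norm_nonneg _
    gcongr
    exact hdist_le v
  have hδb'_nonneg : 0 ≤ δb' :=
    hδb' ▸ Real.iSup_nonneg fun _ => Real.iInf_nonneg fun _ => norm_nonneg _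
  have hA : 0 ≤ 2 - 2 * √(1 - δb ^ 2) := by
    have := Real.sqrt_le_one.2 (sub_le_self 1 (sq_nonneg δb))
    linarith
  rw [← Real.le_sqrt hδb'_nonneg hA]
  exact hδb' ▸ Real.iSup_le hunit_le (Real.sqrt_nonneg _)

theorem stmt_3 {H : Type*} [NormedAddCommGroup H] [InnerProductSpace ℝ H]
    (E F : Submodule ℝ H) [FiniteDimensional ℝ F] (hE : E ≠ ⊥) (hF : F ≠ ⊥)
    (δb δb' : ℝ)
    (hδb : δb = ⨆ v : {v : H // v ∈ E ∧ ‖v‖ = 1}, ⨅ w : F, ‖(v : H) - (w : H)‖)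
    (hδb' : δb' = ⨆ v : {v : H // v ∈ E ∧ ‖v‖ = 1},
      ⨅ w : {w : H // w ∈ F ∧ ‖w‖ = 1}, ‖(v : H) - (w : H)‖)
    (h1 : δb ≤ 1) :
    δb' ^ 2 ≤ 2 - 2 * Real.sqrt (1 - δb ^ 2) :=
  stmt_3_general E F hF δb δb' hδb hδb'
end

section
/- Let u₂, u₃ be orthonormal in a real inner product space, P the orthogonal projection onto a finite-dimensional subspace E^h, and suppose ‖uᵢ − Puᵢ‖ ≤ δ_b < 1/2 for i = 2,3. Define v₂ = Pu₂/s₂ with s₂ = ‖Pu₂‖, and v₃ = (Pu₃ − ⟨Pu₃, v₂⟩v₂)/s₃ with s₃ = ‖Pu₃ − ⟨Pu₃, v₂⟩v₂‖. Then (v₂, v₃) is an orthonormal pair in E^h and ‖uᵢ − vᵢ‖ ≤ 2δ_b(2 − δ_b)/(1 − 2δ_b) for i = 2,3. -/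
/-!
The residuals `uᵢ - P uᵢ` are orthogonal to `E^h`, so `⟪P u₂, P u₃⟫ = -⟪u₂ - P u₂, u₃ - P u₃⟫`
has size at most `δ²`, and the Gram–Schmidt correction of `P u₃` has size at most `δ² / (1 - δ)`.
Hence `P u₂` and `q₃` lie within `δ` and `δ / (1 - δ)` of the unit vectors `u₂` and `u₃`.
Normalizing a vector at distance `ε` from a unit vector moves it by at most another `ε`,
so `‖uᵢ - vᵢ‖ ≤ 2δ / (1 - δ) ≤ 2δ(2 - δ) / (1 - 2δ)`.
-/

open scoped RealInnerProductSpace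

section Normalize

variable {E : Type*} [NormedAddCommGroup E] [NormedSpace ℝ E]

theorem norm_sub_inv_norm_smul_self_le (x : E) {u : E} (hu : ‖u‖ = 1) :
    ‖x - ‖x‖⁻¹ • x‖ ≤ ‖u - x‖ := by
  rcases eq_or_ne x 0 with rfl | hx
  · simp
  have hx' : 0 < ‖x‖ := norm_pos_iff.mpr hx
  have hscale : ‖x‖ - 1 = (1 - ‖x‖⁻¹) * ‖x‖ := by field_simp
  calc ‖x - ‖x‖⁻¹ • x‖ = |‖x‖ - 1| := by
        rw [show x - ‖x‖⁻¹ • x = (1 - ‖x‖⁻¹) • x by rw [sub_smul, one_smul], norm_smul,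
          Real.norm_eq_abs, hscale, abs_mul, abs_of_pos hx']
    _ ≤ ‖u - x‖ := by simpa [hu, abs_sub_comm] using abs_norm_sub_norm_le u x

theorem norm_sub_inv_norm_smul_le {u : E} (hu : ‖u‖ = 1) (x : E) :
    ‖u - ‖x‖⁻¹ • x‖ ≤ 2 * ‖u - x‖ :=
  calc ‖u - ‖x‖⁻¹ • x‖ ≤ ‖u - x‖ + ‖x - ‖x‖⁻¹ • x‖ := norm_sub_le_norm_sub_add_norm_sub _ _ _
    _ ≤ 2 * ‖u - x‖ := by linarith [norm_sub_inv_norm_smul_self_le x hu]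

theorem norm_inv_norm_smul_of_norm_sub_lt_one {u x : E} (hu : ‖u‖ = 1) (h : ‖u - x‖ < 1) :
    ‖‖x‖⁻¹ • x‖ = 1 := by
  have hx : x ≠ 0 := by rintro rfl; simp [hu] at h
  exact norm_smul_inv_norm hx

end Normalize

section InnerProduct

variable {H : Type*} [NormedAddCommGroup H] [InnerProductSpace ℝ H]
  (K : Submodule ℝ H) [K.HasOrthogonalProjection]

theorem inner_eq_inner_starProjection_add_inner_sub (u w : H) :
    ⟪u, w⟫ = ⟪K.starProjection u, K.starProjection w⟫ +
      ⟪u - K.starProjection u, w - K.starProjection w⟫ := by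
  have h₁ := K.starProjection_inner_eq_zero u _ (K.starProjection_apply_mem w)
  have h₂ := K.starProjection_inner_eq_zero w _ (K.starProjection_apply_mem u)
  rw [real_inner_comm] at h₂
  calc ⟪u, w⟫ = ⟪K.starProjection u + (u - K.starProjection u),
        K.starProjection w + (w - K.starProjection w)⟫ := by simp only [add_sub_cancel]
    _ = _ := by simp only [inner_add_left, inner_add_right, h₁, h₂]; ring

theorem abs_inner_starProjection_le_of_inner_eq_zero {u w : H} (h : ⟪u, w⟫ = 0) :
    |⟪K.starProjection u, K.starProjection w⟫| ≤
      ‖u - K.starProjection u‖ * ‖w - K.starProjection w‖ := by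
  rw [inner_eq_inner_starProjection_add_inner_sub K, add_eq_zero_iff_eq_neg] at h
  rw [h, abs_neg]
  exact abs_real_inner_le_norm _ _

theorem abs_inner_inv_norm_smul_starProjection_le {u w : H} (hu : ‖u‖ = 1) (h : ⟪u, w⟫ = 0)
    {δ ε : ℝ} (hδ : ‖u - K.starProjection u‖ ≤ δ) (hδ1 : δ < 1)
    (hε : ‖w - K.starProjection w‖ ≤ ε) :
    |⟪K.starProjection w, ‖K.starProjection u‖⁻¹ • K.starProjection u⟫| ≤ δ * ε / (1 - δ) := by
  have hnorm : 1 - δ ≤ ‖K.starProjection u‖ := by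
    linarith [hu ▸ norm_sub_norm_le u (K.starProjection u)]
  rw [real_inner_smul_right, abs_mul, abs_inv, abs_norm, real_inner_comm, inv_mul_eq_div]
  have hδ0 : 0 ≤ δ := (norm_nonneg _).trans hδ
  have hε0 : 0 ≤ ε := (norm_nonneg _).trans hε
  gcongr
  exact (abs_inner_starProjection_le_of_inner_eq_zero K h).trans
    (mul_le_mul hδ hε (norm_nonneg _) hδ0)

theorem inner_sub_inner_smul_self_eq_zero {v : H} (hv : ‖v‖ = 1) (p : H) :
    ⟪v, p - ⟪p, v⟫ • v⟫ = 0 := by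
  rw [inner_sub_right, real_inner_smul_right, real_inner_self_eq_norm_sq, hv,
    real_inner_comm]
  ring

theorem norm_sub_sub_inner_smul_le {v : H} (hv : ‖v‖ = 1) (u p : H) :
    ‖u - (p - ⟪p, v⟫ • v)‖ ≤ ‖u - p‖ + |⟪p, v⟫| := by
  calc ‖u - (p - ⟪p, v⟫ • v)‖ = ‖(u - p) + ⟪p, v⟫ • v‖ := by
        rw [sub_sub_eq_add_sub, add_sub_right_comm]
    _ ≤ ‖u - p‖ + |⟪p, v⟫| := by
      simpa [norm_smul, hv] using norm_add_le (u - p) (⟪p, v⟫ • v)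

end InnerProduct

theorem two_mul_div_one_sub_le {δ : ℝ} (h0 : 0 ≤ δ) (h : δ < 1 / 2) :
    2 * (δ / (1 - δ)) ≤ 2 * δ * (2 - δ) / (1 - 2 * δ) := by
  rw [mul_div_assoc', div_le_div_iff₀ (by linarith) (by linarith)]
  nlinarith [mul_nonneg h0 (sq_nonneg δ)]

/-- Gram–Schmidt orthonormalization of the projections of an orthonormal pair:
if `‖uᵢ − Puᵢ‖ ≤ δ_b < 1/2` then `(v₂, v₃)` is an orthonormal pair in `F` with
`‖uᵢ − vᵢ‖ ≤ 2δ_b(2 − δ_b)/(1 − 2δ_b)`. -/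
theorem stmt_6 {H : Type*} [NormedAddCommGroup H] [InnerProductSpace ℝ H]
    (F : Submodule ℝ H) [FiniteDimensional ℝ F] (u₂ u₃ : H)
    (hu₂ : ‖u₂‖ = 1) (hu₃ : ‖u₃‖ = 1) (horth : ⟪u₂, u₃⟫ = 0)
    (δb : ℝ) (hδb : δb < 1 / 2)
    (h2 : ‖u₂ - (Submodule.orthogonalProjectionOnto F u₂ : H)‖ ≤ δb)
    (h3 : ‖u₃ - (Submodule.orthogonalProjectionOnto F u₃ : H)‖ ≤ δb)
    (p₂ p₃ q₃ v₂ v₃ : H) (s₂ s₃ : ℝ)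
    (hp₂ : p₂ = (Submodule.orthogonalProjectionOnto F u₂ : H))
    (hp₃ : p₃ = (Submodule.orthogonalProjectionOnto F u₃ : H))
    (hs₂ : s₂ = ‖p₂‖) (hv₂ : v₂ = s₂⁻¹ • p₂)
    (hq₃ : q₃ = p₃ - ⟪p₃, v₂⟫ • v₂)
    (hs₃ : s₃ = ‖q₃‖) (hv₃ : v₃ = s₃⁻¹ • q₃) :
    ‖v₂‖ = 1 ∧ ‖v₃‖ = 1 ∧ ⟪v₂, v₃⟫ = 0 ∧ v₂ ∈ F ∧ v₃ ∈ F ∧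
      ‖u₂ - v₂‖ ≤ 2 * δb * (2 - δb) / (1 - 2 * δb) ∧
      ‖u₃ - v₃‖ ≤ 2 * δb * (2 - δb) / (1 - 2 * δb) := by
  rw [← Submodule.starProjection_apply] at h2 h3 hp₂ hp₃
  subst hv₃ hs₃ hq₃ hv₂ hs₂ hp₂ hp₃
  have hδ0 : 0 ≤ δb := (norm_nonneg _).trans h2
  have hδ1 : δb < 1 := by linarith
  have hv₂ := norm_inv_norm_smul_of_norm_sub_lt_one hu₂ (h2.trans_lt hδ1)
  set v₂ := ‖F.starProjection u₂‖⁻¹ • F.starProjection u₂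
  set q₃ := F.starProjection u₃ - ⟪F.starProjection u₃, v₂⟫ • v₂
  have hq₃ : ‖u₃ - q₃‖ ≤ δb / (1 - δb) :=
    calc _ ≤ δb + δb * δb / (1 - δb) := (norm_sub_sub_inner_smul_le hv₂ _ _).trans
          (add_le_add h3 (abs_inner_inv_norm_smul_starProjection_le F hu₂ horth h2 hδ1 h3))
      _ = δb / (1 - δb) := by field_simp [show 1 - δb ≠ 0 by linarith]; ring
  have hv₃ := norm_inv_norm_smul_of_norm_sub_lt_one hu₃
    (hq₃.trans_lt ((div_lt_one (by linarith)).2 (by linarith)))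
  have hv₂F : v₂ ∈ F := F.smul_mem _ (F.starProjection_apply_mem _)
  have hδ_le : δb ≤ δb / (1 - δb) := le_div_self hδ0 (by linarith) (by linarith)
  refine ⟨hv₂, hv₃, ?_, hv₂F, ?_, ?_, ?_⟩
  · rw [real_inner_smul_right, inner_sub_inner_smul_self_eq_zero hv₂, mul_zero]
  · exact F.smul_mem _ (F.sub_mem (F.starProjection_apply_mem _) (F.smul_mem _ hv₂F))
  · calc _ ≤ 2 * ‖u₂ - F.starProjection u₂‖ := norm_sub_inv_norm_smul_le hu₂ _
      _ ≤ 2 * (δb / (1 - δb)) := by linarith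
      _ ≤ _ := two_mul_div_one_sub_le hδ0 hδb
  · calc _ ≤ 2 * (δb / (1 - δb)) := (norm_sub_inv_norm_smul_le hu₃ _).trans (by linarith)
      _ ≤ _ := two_mul_div_one_sub_le hδ0 hδb
end

section
/- Let u₂, u₃ be orthonormal, P the orthogonal projection onto a finite-dimensional subspace, δ_b ≥ 0 with ‖uᵢ − Puᵢ‖ ≤ δ_b and δ_b < 1, and set v₂ = Pu₂/‖Pu₂‖. Then |⟨Pu₃, v₂⟩| ≤ δ_b²/(1 − δ_b). -/
/-!
Since `P` is a self-adjoint idempotent, `⟪u, v⟫ = ⟪P u, P v⟫ + ⟪u - P u, v - P v⟫`. For the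
orthogonal pair `u₂, u₃` this gives `|⟪P u₃, P u₂⟫| ≤ ‖u₃ - P u₃‖ ‖u₂ - P u₂‖ ≤ δ_b²`, and
normalising costs at most the factor `1 / ‖P u₂‖ ≤ 1 / (1 - δ_b)`.
-/

open scoped InnerProductSpace RealInnerProductSpace

namespace Submodule

variable {𝕜 E : Type*} [RCLike 𝕜] [NormedAddCommGroup E] [InnerProductSpace 𝕜 E]
  (K : Submodule 𝕜 E) [K.HasOrthogonalProjection]

theorem inner_eq_inner_starProjection_add_inner_sub_starProjection (u v : E) :
    ⟪u, v⟫_𝕜 = ⟪K.starProjection u, K.starProjection v⟫_𝕜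
      + ⟪u - K.starProjection u, v - K.starProjection v⟫_𝕜 := by
  have hPu : ⟪K.starProjection u, K.starProjection v⟫_𝕜 = ⟪K.starProjection u, v⟫_𝕜 := by
    rw [← inner_starProjection_left_eq_right,
      starProjection_eq_self_iff.mpr (starProjection_apply_mem _ u)]
  rw [inner_sub_right (u - _), K.starProjection_inner_eq_zero _ _ (K.starProjection_apply_mem v),
    sub_zero, hPu, ← inner_add_left, add_sub_cancel]

theorem norm_inner_starProjection_le_of_inner_eq_zero {u v : E} (huv : ⟪u, v⟫_𝕜 = 0) :
    ‖⟪K.starProjection u, K.starProjection v⟫_𝕜‖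
      ≤ ‖u - K.starProjection u‖ * ‖v - K.starProjection v‖ := by
  have hcross := K.inner_eq_inner_starProjection_add_inner_sub_starProjection u v
  rw [huv, eq_comm, add_eq_zero_iff_eq_neg] at hcross
  rw [hcross, norm_neg]
  exact norm_inner_le_norm _ _

end Submodule

theorem stmt_7_general {H : Type*} [NormedAddCommGroup H] [InnerProductSpace ℝ H]
    (F : Submodule ℝ H) [FiniteDimensional ℝ F] (u₂ u₃ : H)
    (hu₂ : ‖u₂‖ = 1) (horth : ⟪u₂, u₃⟫ = 0)
    (δb : ℝ) (hδb : δb < 1)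
    (h2 : ‖u₂ - (Submodule.orthogonalProjectionOnto F u₂ : H)‖ ≤ δb)
    (h3 : ‖u₃ - (Submodule.orthogonalProjectionOnto F u₃ : H)‖ ≤ δb)
    (v₂ : H)
    (hv₂ : v₂ = ‖(Submodule.orthogonalProjectionOnto F u₂ : H)‖⁻¹ • (Submodule.orthogonalProjectionOnto F u₂ : H)) :
    |⟪(Submodule.orthogonalProjectionOnto F u₃ : H), v₂⟫| ≤ δb ^ 2 / (1 - δb) := by
  simp only [Submodule.coe_orthogonalProjectionOnto_apply] at h2 h3 hv₂ ⊢
  have hcross : |⟪F.starProjection u₃, F.starProjection u₂⟫| ≤ δb ^ 2 :=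
    calc |⟪F.starProjection u₃, F.starProjection u₂⟫|
        ≤ ‖u₃ - F.starProjection u₃‖ * ‖u₂ - F.starProjection u₂‖ :=
          F.norm_inner_starProjection_le_of_inner_eq_zero (real_inner_comm u₂ u₃ ▸ horth)
      _ ≤ δb ^ 2 := by rw [sq]; exact mul_le_mul h3 h2 (norm_nonneg _) ((norm_nonneg _).trans h2)
  have hnorm : 1 - δb ≤ ‖F.starProjection u₂‖ := by
    linarith [norm_sub_norm_le u₂ (F.starProjection u₂)]
  rw [hv₂, real_inner_smul_right, abs_mul, abs_inv, abs_norm, inv_mul_eq_div]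
  calc |⟪F.starProjection u₃, F.starProjection u₂⟫| / ‖F.starProjection u₂‖
      ≤ δb ^ 2 / ‖F.starProjection u₂‖ := div_le_div_of_nonneg_right hcross (norm_nonneg _)
    _ ≤ δb ^ 2 / (1 - δb) := div_le_div_of_nonneg_left (sq_nonneg _) (by linarith) hnorm

/-- If `u₂, u₃` are orthonormal, `‖uᵢ − Puᵢ‖ ≤ δ_b < 1`, and `v₂ = Pu₂/‖Pu₂‖`,
then `|⟨Pu₃, v₂⟩| ≤ δ_b²/(1 − δ_b)`. -/
theorem stmt_7 {H : Type*} [NormedAddCommGroup H] [InnerProductSpace ℝ H]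
    (F : Submodule ℝ H) [FiniteDimensional ℝ F] (u₂ u₃ : H)
    (hu₂ : ‖u₂‖ = 1) (hu₃ : ‖u₃‖ = 1) (horth : ⟪u₂, u₃⟫ = 0)
    (δb : ℝ) (hδb0 : 0 ≤ δb) (hδb : δb < 1)
    (h2 : ‖u₂ - (Submodule.orthogonalProjectionOnto F u₂ : H)‖ ≤ δb)
    (h3 : ‖u₃ - (Submodule.orthogonalProjectionOnto F u₃ : H)‖ ≤ δb)
    (v₂ : H)
    (hv₂ : v₂ = ‖(Submodule.orthogonalProjectionOnto F u₂ : H)‖⁻¹ • (Submodule.orthogonalProjectionOnto F u₂ : H)) :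
    |⟪(Submodule.orthogonalProjectionOnto F u₃ : H), v₂⟫| ≤ δb ^ 2 / (1 - δb) :=
  stmt_7_general F u₂ u₃ hu₂ horth δb hδb h2 h3 v₂ hv₂
end
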